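/- arXiv:1306.3618 — 2 statements merged into one kernel-verified Lean document; each statement's English description precedes it below -/
import Mathlib

section
/- (Proposition 6, monotonicity in the threshold) Let K ≥ 1 and let k₁, k₂ be natural numbers with 0 ≤ k₁ < k₂ ≤ K-1. Let P_F ∈ (0,1) and suppose P_M¹, P_M² ∈ (0,1) satisfy B(k₁; K, P_F) + B(k₁; K, 1-P_M¹) = 1 and B(k₂; K, P_F) + B(k₂; K, 1-P_M²) = 1. Then P_M¹ > P_M². -/
/-!
Each summand of `binCdf K k p` is the Bernstein basis polynomial `b_{K,i}` evaluated at `p`, and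
the derivatives of the Bernstein polynomials telescope: `d/dp B(k; K, p) = -K b_{K-1,k}(p) < 0`
on `(0, 1)`. Raising the threshold from `k₁` to `k₂` raises `B(·; K, P_F)`, so the robustness
condition forces `B(k₂; K, 1 - P_M²) < B(k₁; K, 1 - P_M¹) < B(k₂; K, 1 - P_M¹)`, and the strict
decrease of `B(k₂; K, ·)` gives `1 - P_M¹ < 1 - P_M²`.
-/

/-- Binomial cumulative distribution function: probability of at most `k` successes out of
`K` trials, each with success probability `p`. -/
noncomputable def binCdf (K k : ℕ) (p : ℝ) : ℝ :=
  ∑ i ∈ Finset.range (k + 1), (K.choose i : ℝ) * p ^ i * (1 - p) ^ (K - i)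

open Finset Polynomial

theorem derivative_sum_range_bernsteinPolynomial {R : Type*} [CommRing R] (n k : ℕ) :
    derivative (∑ i ∈ range (k + 1), bernsteinPolynomial R n i) =
      -n * bernsteinPolynomial R (n - 1) k := by
  induction k with
  | zero => simp [bernsteinPolynomial.derivative_zero]
  | succ k ih =>
    rw [sum_range_succ, derivative_add, ih, bernsteinPolynomial.derivative_succ]
    ring

theorem bernsteinPolynomial_eval_pos {n ν : ℕ} (h : ν ≤ n) {x : ℝ} (hx : x ∈ Set.Ioo 0 1) :
    0 < (bernsteinPolynomial ℝ n ν).eval x := by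
  have hx' : 0 < 1 - x := sub_pos.2 hx.2
  have hc : (0 : ℝ) < n.choose ν := by exact_mod_cast Nat.choose_pos h
  simp only [bernsteinPolynomial, eval_mul, eval_pow, eval_sub, eval_one, eval_X, eval_natCast]
  have := hx.1
  positivity

theorem binCdf_eq_eval (K k : ℕ) (p : ℝ) :
    binCdf K k p = (∑ i ∈ range (k + 1), bernsteinPolynomial ℝ K i).eval p := by
  simp [binCdf, eval_finsetSum, bernsteinPolynomial]

theorem hasDerivAt_binCdf (K k : ℕ) (p : ℝ) :
    HasDerivAt (binCdf K k) (-K * (bernsteinPolynomial ℝ (K - 1) k).eval p) p := by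
  have h := (∑ i ∈ range (k + 1), bernsteinPolynomial ℝ K i).hasDerivAt p
  rw [derivative_sum_range_bernsteinPolynomial] at h
  simpa [funext (binCdf_eq_eval K k)] using h

theorem binCdf_strictAntiOn {K k : ℕ} (hk : k < K) : StrictAntiOn (binCdf K k) (Set.Icc 0 1) := by
  refine strictAntiOn_of_deriv_neg (convex_Icc 0 1)
    (fun p _ => (hasDerivAt_binCdf K k p).continuousAt.continuousWithinAt) fun p hp => ?_
  rw [interior_Icc] at hp
  have hK : (0 : ℝ) < K := by exact_mod_cast (Nat.zero_le k).trans_lt hk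
  rw [(hasDerivAt_binCdf K k p).deriv, neg_mul, neg_lt_zero]
  exact mul_pos hK (bernsteinPolynomial_eval_pos (by omega) hp)

theorem binCdf_lt_binCdf {K k₁ k₂ : ℕ} (hk : k₁ < k₂) (hk₂ : k₂ ≤ K) {p : ℝ}
    (hp : p ∈ Set.Ioo 0 1) : binCdf K k₁ p < binCdf K k₂ p := by
  have hpos : ∀ i ∈ range (k₂ + 1), 0 < (bernsteinPolynomial ℝ K i).eval p := fun i hi =>
    bernsteinPolynomial_eval_pos (by rw [mem_range] at hi; omega) hp
  simp only [binCdf_eq_eval, eval_finsetSum]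
  exact sum_lt_sum_of_subset (range_subset_range.2 (by omega)) (self_mem_range_succ k₂)
    (by simp [hk]) (hpos k₂ (self_mem_range_succ k₂)) fun i hi _ => (hpos i hi).le

theorem fusion_curve_mono_in_threshold_general (K k₁ k₂ : ℕ)
    (hk : k₁ < k₂) (hk₂ : k₂ ≤ K - 1)
    (PF PM₁ PM₂ : ℝ) (hPF : PF ∈ Set.Ioo (0:ℝ) 1)
    (hPM₁ : PM₁ ∈ Set.Ioo (0:ℝ) 1) (hPM₂ : PM₂ ∈ Set.Ioo (0:ℝ) 1)
    (h1 : binCdf K k₁ PF + binCdf K k₁ (1 - PM₁) = 1)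
    (h2 : binCdf K k₂ PF + binCdf K k₂ (1 - PM₂) = 1) :
    PM₂ < PM₁ := by
  have hk₂K : k₂ < K := by omega
  have hq₁ : 1 - PM₁ ∈ Set.Ioo (0:ℝ) 1 := ⟨by linarith [hPM₁.2], by linarith [hPM₁.1]⟩
  have hq₂ : 1 - PM₂ ∈ Set.Icc (0:ℝ) 1 := ⟨by linarith [hPM₂.2], by linarith [hPM₂.1]⟩
  have key : binCdf K k₂ (1 - PM₂) < binCdf K k₂ (1 - PM₁) := by
    linarith [binCdf_lt_binCdf hk hk₂K.le hPF, binCdf_lt_binCdf hk hk₂K.le hq₁]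
  have := ((binCdf_strictAntiOn hk₂K).lt_iff_gt hq₂ (Set.Ioo_subset_Icc_self hq₁)).1 key
  linarith

/-- Proposition 6, monotonicity in the threshold: for `0 ≤ k₁ < k₂ ≤ K-1`,
`P_F ∈ (0,1)` and `P_M¹, P_M² ∈ (0,1)` with `B(k₁; K, P_F) + B(k₁; K, 1-P_M¹) = 1` and
`B(k₂; K, P_F) + B(k₂; K, 1-P_M²) = 1`, one has `P_M¹ > P_M²`. -/
theorem fusion_curve_mono_in_threshold (K k₁ k₂ : ℕ) (hK : 1 ≤ K)
    (hk : k₁ < k₂) (hk₂ : k₂ ≤ K - 1)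
    (PF PM₁ PM₂ : ℝ) (hPF : PF ∈ Set.Ioo (0:ℝ) 1)
    (hPM₁ : PM₁ ∈ Set.Ioo (0:ℝ) 1) (hPM₂ : PM₂ ∈ Set.Ioo (0:ℝ) 1)
    (h1 : binCdf K k₁ PF + binCdf K k₁ (1 - PM₁) = 1)
    (h2 : binCdf K k₂ PF + binCdf K k₂ (1 - PM₂) = 1) :
    PM₂ < PM₁ :=
  fusion_curve_mono_in_threshold_general K k₁ k₂ hk hk₂ PF PM₁ PM₂ hPF hPM₁ hPM₂ h1 h2
end

section
/- (Theorem 1, Equation (46)) For odd K = 2n+1, θ ∈ (0,1/2) and θ̂ = θ/(1-θ), let L^K(θ) = ∑_{i=n+1}^{K} C(K,i) θ^i (1-θ)^{K-i} - θ̂^K/(1 + θ̂^K). Then lim_{K→∞, K odd} sup_{θ ∈ (0,1/2)} L^K(θ) = 1/2. -/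
/-!
For `θ ≤ 1/2` every term `θ^i (1-θ)^(K-i)` with `i > K/2` is dominated by its reflection
`(1-θ)^i θ^(K-i)`, and the two sums add up to `1`; so the majority error is at most `1/2`, and
the fusion error is nonnegative.

At `θ = 1/2 - ε` the gap between the two sums is, term by term and by the mean value bound
`q^m - p^m ≤ m (q - p) q^(m-1)`, at most `4ε E|2X - K|` for `X ~ Bin(K, 1/2 + ε)`, and
Cauchy–Schwarz with the binomial variance gives `E|2X - K| ≤ √K + 2Kε`. The fusion error is at most
`(1 + 2ε)^(-K) ≤ 1/(1 + 2Kε)`. For `ε = K^(-3/4)` both losses are `O(K^(-1/4))`.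
-/

open Finset Filter Topology

def binomWeight (K : ℕ) (q : ℝ) (i : ℕ) : ℝ := K.choose i * q ^ i * (1 - q) ^ (K - i)

section BinomialMoments

variable (K : ℕ) {q : ℝ}

theorem binomWeight_nonneg (hq0 : 0 ≤ q) (hq1 : q ≤ 1) (i : ℕ) : 0 ≤ binomWeight K q i := by
  have : 0 ≤ 1 - q := by linarith
  unfold binomWeight; positivity

theorem binomWeight_one_sub {i : ℕ} (hi : i ≤ K) (q : ℝ) :
    binomWeight K (1 - q) i = binomWeight K q (K - i) := by
  simp only [binomWeight, Nat.choose_symm hi, Nat.sub_sub_self hi, sub_sub_cancel]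
  ring

theorem sum_binomWeight (q : ℝ) : ∑ i ∈ range (K + 1), binomWeight K q i = 1 := by
  simpa [binomWeight, bernsteinPolynomial, Polynomial.eval_finsetSum] using
    congrArg (Polynomial.eval q) (bernsteinPolynomial.sum ℝ K)

theorem sum_binomWeight_mul_sub_sq (q : ℝ) :
    ∑ i ∈ range (K + 1), binomWeight K q i * (i - K * q) ^ 2 = K * q * (1 - q) := by
  have := congrArg (Polynomial.eval q) (bernsteinPolynomial.variance ℝ K)
  simp only [bernsteinPolynomial, Polynomial.eval_finsetSum, Polynomial.eval_mul,
    Polynomial.eval_pow, Polynomial.eval_sub, Polynomial.eval_X,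
    Polynomial.eval_natCast, Polynomial.eval_one, nsmul_eq_mul] at this
  rw [← this]
  exact sum_congr rfl fun i _ => by unfold binomWeight; ring

theorem sum_binomWeight_mul_abs_sub_le (hq0 : 0 ≤ q) (hq1 : q ≤ 1) :
    ∑ i ∈ range (K + 1), binomWeight K q i * |i - K * q| ≤ √(K * q * (1 - q)) := by
  apply Real.le_sqrt_of_sq_le
  calc (∑ i ∈ range (K + 1), binomWeight K q i * |i - K * q|) ^ 2
      ≤ (∑ i ∈ range (K + 1), binomWeight K q i) *
          ∑ i ∈ range (K + 1), binomWeight K q i * (i - K * q) ^ 2 := by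
        refine sum_sq_le_sum_mul_sum_of_sq_le_mul _ (fun i _ => binomWeight_nonneg K hq0 hq1 i)
          (fun i _ => mul_nonneg (binomWeight_nonneg K hq0 hq1 i) (sq_nonneg _)) fun i _ => ?_
        exact le_of_eq (by rw [mul_pow, sq_abs]; ring)
    _ = K * q * (1 - q) := by rw [sum_binomWeight, sum_binomWeight_mul_sub_sq, one_mul]

theorem sum_binomWeight_mul_abs_two_mul_sub_le (hq0 : 0 ≤ q) (hq1 : q ≤ 1) :
    ∑ i ∈ range (K + 1), binomWeight K q i * |2 * (i : ℝ) - K| ≤ √K + K * |2 * q - 1| := by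
  have hsqrt : 2 * √(K * q * (1 - q)) ≤ √K := by
    rw [show (2 : ℝ) = √4 by rw [show (4 : ℝ) = 2 ^ 2 by norm_num, Real.sqrt_sq two_pos.le],
      ← Real.sqrt_mul four_pos.le]
    exact Real.sqrt_le_sqrt (by nlinarith [sq_nonneg (2 * q - 1), (K.cast_nonneg : (0 : ℝ) ≤ K)])
  have hw := binomWeight_nonneg K hq0 hq1
  calc ∑ i ∈ range (K + 1), binomWeight K q i * |2 * (i : ℝ) - K|
      ≤ ∑ i ∈ range (K + 1),
          (2 * (binomWeight K q i * |i - K * q|) + K * |2 * q - 1| * binomWeight K q i) := by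
        refine sum_le_sum fun i _ => ?_
        have := abs_sub_le (2 * (i : ℝ)) (2 * (K * q)) K
        rw [show 2 * (i : ℝ) - 2 * (K * q) = 2 * (i - K * q) by ring, abs_mul, abs_two,
          show 2 * (K * q) - K = K * (2 * q - 1) by ring, abs_mul, Nat.abs_cast] at this
        nlinarith [hw i]
    _ = 2 * ∑ i ∈ range (K + 1), binomWeight K q i * |i - K * q| + K * |2 * q - 1| := by
        rw [sum_add_distrib, ← mul_sum, ← mul_sum, sum_binomWeight, mul_one]
    _ ≤ √K + K * |2 * q - 1| := by
        linarith [sum_binomWeight_mul_abs_sub_le K hq0 hq1]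

end BinomialMoments

section PowerComparison

variable {p q : ℝ} {a b : ℕ}

theorem pow_mul_pow_le_pow_mul_pow (hp : 0 ≤ p) (hpq : p ≤ q) (hba : b ≤ a) :
    p ^ a * q ^ b ≤ q ^ a * p ^ b := by
  obtain ⟨m, rfl⟩ := Nat.exists_eq_add_of_le hba
  have hq : 0 ≤ q := hp.trans hpq
  calc p ^ (b + m) * q ^ b = (p * q) ^ b * p ^ m := by ring
    _ ≤ (p * q) ^ b * q ^ m := by gcongr
    _ = q ^ (b + m) * p ^ b := by ring

theorem pow_mul_pow_sub_pow_mul_pow_le (hp : 0 ≤ p) (hpq : p ≤ q) (hq : 1 / 2 ≤ q)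
    (hba : b ≤ a) : q ^ a * p ^ b - p ^ a * q ^ b ≤ 2 * (q - p) * (a - b) * (q ^ a * p ^ b) := by
  obtain ⟨m, rfl⟩ := Nat.exists_eq_add_of_le hba
  have hq0 : 0 ≤ q := hp.trans hpq
  -- `q^(m-1) ≤ 2 q^m` as `q ≥ 1/2`
  have hmv : q ^ m - p ^ m ≤ 2 * (q - p) * m * q ^ m := by
    have h := (le_abs_self _).trans (abs_pow_sub_pow_le q p m)
    rw [abs_of_nonneg (sub_nonneg.2 hpq), abs_of_nonneg hp, abs_of_nonneg hq0,
      max_eq_left hpq] at h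
    refine h.trans ?_
    rcases m with _ | m
    · simp
    · rw [Nat.add_sub_cancel, pow_succ]
      have : 0 ≤ (q - p) * (m + 1) * q ^ m := by have := sub_nonneg.2 hpq; positivity
      push_cast; nlinarith
  calc q ^ (b + m) * p ^ b - p ^ (b + m) * q ^ b = (p * q) ^ b * (q ^ m - p ^ m) := by ring
    _ ≤ (p * q) ^ b * (2 * (q - p) * m * q ^ m) := by gcongr
    _ = 2 * (q - p) * (↑(b + m) - b) * (q ^ (b + m) * p ^ b) := by push_cast; ring

end PowerComparison

theorem binomWeight_one_sub_sub_le {K i : ℕ} {θ : ℝ} (hi : K ≤ 2 * i) (hiK : i ≤ K) (hθ0 : 0 ≤ θ)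
    (hθ : θ ≤ 1 / 2) :
    binomWeight K (1 - θ) i - binomWeight K θ i ≤
      2 * (1 - 2 * θ) * (binomWeight K (1 - θ) i * |2 * (i : ℝ) - K|) := by
  have h := pow_mul_pow_sub_pow_mul_pow_le hθ0 (by linarith : θ ≤ 1 - θ) (by linarith)
    (by omega : K - i ≤ i)
  have hm : (i : ℝ) - ↑(K - i) = |2 * (i : ℝ) - K| := by
    rw [Nat.cast_sub hiK, abs_of_nonneg (by rw [sub_nonneg]; exact_mod_cast hi)]; ring
  rw [hm, show 1 - θ - θ = 1 - 2 * θ by ring] at h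
  simp only [binomWeight, sub_sub_cancel]
  linarith [mul_le_mul_of_nonneg_left h (Nat.cast_nonneg (K.choose i) : (0 : ℝ) ≤ K.choose i)]

def majorityError (n : ℕ) (θ : ℝ) : ℝ :=
  ∑ i ∈ Icc (n + 1) (2 * n + 1), binomWeight (2 * n + 1) θ i

section MajorityError

variable (n : ℕ) {θ : ℝ}

theorem majorityError_add_majorityError_one_sub (θ : ℝ) :
    majorityError n θ + majorityError n (1 - θ) = 1 := by
  have hreflect : majorityError n (1 - θ) = ∑ i ∈ range (n + 1), binomWeight (2 * n + 1) θ i := by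
    refine sum_nbij' (fun i => 2 * n + 1 - i) (fun i => 2 * n + 1 - i) ?_ ?_ ?_ ?_ ?_ <;>
      intro i hi <;> simp only [mem_Icc, mem_range] at hi ⊢
    any_goals omega
    exact binomWeight_one_sub _ (by omega) θ
  rw [hreflect, add_comm, majorityError, ← Finset.Ico_add_one_right_eq_Icc,
    sum_range_add_sum_Ico _ (by omega), sum_binomWeight]

theorem majorityError_le_majorityError_one_sub (hθ0 : 0 ≤ θ) (hθ : θ ≤ 1 / 2) :
    majorityError n θ ≤ majorityError n (1 - θ) := by
  refine sum_le_sum fun i hi => ?_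
  simp only [binomWeight, sub_sub_cancel, mul_assoc]
  exact mul_le_mul_of_nonneg_left
    (pow_mul_pow_le_pow_mul_pow hθ0 (by linarith) (by grind)) (Nat.cast_nonneg _)

theorem majorityError_le_half (hθ0 : 0 ≤ θ) (hθ : θ ≤ 1 / 2) : majorityError n θ ≤ 1 / 2 := by
  linarith [majorityError_add_majorityError_one_sub n θ,
    majorityError_le_majorityError_one_sub n hθ0 hθ]

theorem majorityError_one_sub_sub_le (hθ0 : 0 ≤ θ) (hθ : θ ≤ 1 / 2) :
    majorityError n (1 - θ) - majorityError n θ ≤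
      2 * (1 - 2 * θ) * (√(2 * n + 1) + (2 * n + 1) * (1 - 2 * θ)) := by
  set K := 2 * n + 1
  have hw : ∀ i, 0 ≤ binomWeight K (1 - θ) i :=
    binomWeight_nonneg K (by linarith) (by linarith)
  have hδ : 0 ≤ 1 - 2 * θ := by linarith
  calc majorityError n (1 - θ) - majorityError n θ
      = ∑ i ∈ Icc (n + 1) K, (binomWeight K (1 - θ) i - binomWeight K θ i) :=
        (sum_sub_distrib ..).symm
    _ ≤ ∑ i ∈ Icc (n + 1) K, 2 * (1 - 2 * θ) * (binomWeight K (1 - θ) i * |2 * (i : ℝ) - K|) :=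
        sum_le_sum fun i hi =>
          binomWeight_one_sub_sub_le (by grind) (mem_Icc.1 hi).2 hθ0 hθ
    _ ≤ ∑ i ∈ range (K + 1), 2 * (1 - 2 * θ) * (binomWeight K (1 - θ) i * |2 * (i : ℝ) - K|) :=
        sum_le_sum_of_subset_of_nonneg (fun i hi => by grind)
          fun i _ _ => mul_nonneg (by linarith) (mul_nonneg (hw i) (abs_nonneg _))
    _ = 2 * (1 - 2 * θ) * ∑ i ∈ range (K + 1), binomWeight K (1 - θ) i * |2 * (i : ℝ) - K| :=
        (mul_sum ..).symm
    _ ≤ 2 * (1 - 2 * θ) * (√K + K * |2 * (1 - θ) - 1|) := by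
        gcongr
        exact sum_binomWeight_mul_abs_two_mul_sub_le K (by linarith) (by linarith)
    _ = 2 * (1 - 2 * θ) * (√(2 * n + 1) + (2 * n + 1) * (1 - 2 * θ)) := by
        rw [show 2 * (1 - θ) - 1 = 1 - 2 * θ by ring, abs_of_nonneg hδ]
        push_cast [K]; ring

theorem half_sub_le_majorityError {ε : ℝ} (hε0 : 0 ≤ ε) (hε : ε ≤ 1 / 2) :
    1 / 2 - 2 * ε * (√(2 * n + 1) + 2 * (2 * n + 1) * ε) ≤ majorityError n (1 / 2 - ε) := by
  have h := majorityError_one_sub_sub_le n (θ := 1 / 2 - ε) (by linarith) (by linarith)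
  have hsum := majorityError_add_majorityError_one_sub n (1 / 2 - ε)
  rw [show 1 - 2 * (1 / 2 - ε) = 2 * ε by ring] at h
  linarith

end MajorityError

noncomputable def fusionError (K : ℕ) (θ : ℝ) : ℝ := (θ / (1 - θ)) ^ K / (1 + (θ / (1 - θ)) ^ K)

theorem fusionError_nonneg (K : ℕ) {θ : ℝ} (hθ0 : 0 ≤ θ) (hθ1 : θ ≤ 1) : 0 ≤ fusionError K θ := by
  have : 0 ≤ θ / (1 - θ) := div_nonneg hθ0 (by linarith)
  unfold fusionError; positivity

theorem fusionError_half_sub_le (K : ℕ) {ε : ℝ} (hε0 : 0 ≤ ε) (hε : ε ≤ 1 / 2) :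
    fusionError K (1 / 2 - ε) ≤ 1 / (1 + 2 * K * ε) := by
  set r := (1 / 2 - ε) / (1 - (1 / 2 - ε))
  have hr0 : 0 ≤ r := div_nonneg (by linarith) (by linarith)
  have hr : r ≤ 1 / (1 + 2 * ε) := by
    rw [div_le_div_iff₀ (by linarith) (by linarith)]; nlinarith
  calc fusionError K (1 / 2 - ε) ≤ r ^ K :=
        div_le_self (pow_nonneg hr0 K) (le_add_of_nonneg_right (pow_nonneg hr0 K))
    _ ≤ (1 / (1 + 2 * ε)) ^ K := by gcongr
    _ = 1 / (1 + 2 * ε) ^ K := by rw [one_div_pow]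
    _ ≤ 1 / (1 + 2 * K * ε) := by
        gcongr
        linarith [one_add_mul_le_pow (by linarith : (-2 : ℝ) ≤ 2 * ε) K]

/-- `L^K(θ)` for `K = 2n+1`. -/
noncomputable def loss (n : ℕ) (θ : ℝ) : ℝ := majorityError n θ - fusionError (2 * n + 1) θ

theorem loss_le_half (n : ℕ) {θ : ℝ} (hθ0 : 0 ≤ θ) (hθ : θ ≤ 1 / 2) : loss n θ ≤ 1 / 2 := by
  unfold loss
  linarith [majorityError_le_half n hθ0 hθ, fusionError_nonneg (2 * n + 1) hθ0 (by linarith)]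

noncomputable def lossGap (K ε : ℝ) : ℝ := 2 * ε * (√K + 2 * K * ε) + 1 / (1 + 2 * K * ε)

theorem half_sub_le_loss (n : ℕ) {ε : ℝ} (hε0 : 0 ≤ ε) (hε : ε ≤ 1 / 2) :
    1 / 2 - lossGap (2 * n + 1) ε ≤ loss n (1 / 2 - ε) := by
  have h := fusionError_half_sub_le (2 * n + 1) hε0 hε
  push_cast at h
  unfold loss lossGap
  linarith [half_sub_le_majorityError n hε0 hε]

theorem sSup_loss_le_half (n : ℕ) : sSup (loss n '' Set.Ioo 0 (1 / 2)) ≤ 1 / 2 :=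
  Real.sSup_le (by rintro _ ⟨θ, hθ, rfl⟩; exact loss_le_half n hθ.1.le hθ.2.le) (by norm_num)

theorem loss_le_sSup (n : ℕ) {θ : ℝ} (hθ : θ ∈ Set.Ioo 0 (1 / 2)) :
    loss n θ ≤ sSup (loss n '' Set.Ioo 0 (1 / 2)) :=
  le_csSup ⟨1 / 2, by rintro _ ⟨θ, hθ, rfl⟩; exact loss_le_half n hθ.1.le hθ.2.le⟩ ⟨θ, hθ, rfl⟩

theorem lossGap_pow_four {y : ℝ} (hy : 0 < y) :
    lossGap (y ^ 4) (1 / y ^ 3) = 2 / y + 4 / y ^ 2 + 1 / (1 + 2 * y) := by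
  rw [lossGap, show y ^ 4 = (y ^ 2) ^ 2 by ring, Real.sqrt_sq (by positivity)]
  field_simp
  ring

theorem tendsto_lossGap_pow_four :
    Tendsto (fun y : ℝ => lossGap (y ^ 4) (1 / y ^ 3)) atTop (𝓝 0) := by
  have h : Tendsto (fun y : ℝ => 2 / y + 4 / y ^ 2 + 1 / (1 + 2 * y)) atTop (𝓝 (0 + 0 + 0)) :=
    ((tendsto_const_nhds.div_atTop tendsto_id).add
    (tendsto_const_nhds.div_atTop (tendsto_pow_atTop two_ne_zero))).add
    (tendsto_const_nhds.div_atTop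
      (tendsto_atTop_add_const_left _ 1 (tendsto_id.const_mul_atTop two_pos)))
  rw [add_zero, add_zero] at h
  exact h.congr' ((eventually_gt_atTop 0).mono fun y hy => (lossGap_pow_four hy).symm)

/-- Theorem 1, Equation (46): for odd `K = 2n+1`, the supremum over
`θ ∈ (0,1/2)` of the loss
`L^K(θ) = ∑_{i=n+1}^{K} C(K,i) θ^i (1-θ)^{K-i} - θ̂^K/(1+θ̂^K)` (with `θ̂ = θ/(1-θ)`)
tends to `1/2` as `K → ∞` through odd values. -/
theorem sup_loss_tendsto_half :
    Filter.Tendsto (fun n : ℕ =>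
      sSup ((fun θ : ℝ =>
        (∑ i ∈ Finset.Icc (n + 1) (2 * n + 1),
            ((2 * n + 1).choose i : ℝ) * θ ^ i * (1 - θ) ^ (2 * n + 1 - i)) -
          (θ / (1 - θ)) ^ (2 * n + 1) / (1 + (θ / (1 - θ)) ^ (2 * n + 1))) ''
        Set.Ioo (0:ℝ) (1/2)))
      Filter.atTop (nhds (1/2)) := by
  change Tendsto (fun n => sSup (loss n '' Set.Ioo 0 (1 / 2))) atTop (𝓝 (1 / 2))
  -- `y = K^(1/4)`, so `θ = 1/2 - 1/y^3 = 1/2 - K^(-3/4)`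
  set y : ℕ → ℝ := fun n => √√(2 * n + 1)
  have hy4 (n : ℕ) : y n ^ 4 = 2 * n + 1 := by
    rw [show 4 = 2 * 2 from rfl, pow_mul, Real.sq_sqrt (Real.sqrt_nonneg _),
      Real.sq_sqrt (by positivity)]
  have hy : Tendsto y atTop atTop :=
    Real.tendsto_sqrt_atTop.comp <| Real.tendsto_sqrt_atTop.comp <|
      tendsto_atTop_add_const_right _ 1 (tendsto_natCast_atTop_atTop.const_mul_atTop two_pos)
  have hlower := (tendsto_lossGap_pow_four.comp hy).const_sub (1 / 2)
  simp only [Function.comp_def, hy4, sub_zero] at hlower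
  refine tendsto_of_tendsto_of_tendsto_of_le_of_le' hlower tendsto_const_nhds ?_
    (Eventually.of_forall sSup_loss_le_half)
  filter_upwards [hy.eventually_ge_atTop 2] with n hn
  have hε : 1 / y n ^ 3 ≤ 1 / 8 := by
    rw [div_le_div_iff₀ (by positivity) (by norm_num)]
    nlinarith [pow_le_pow_left₀ zero_le_two hn 3]
  have hε0 : 0 < 1 / y n ^ 3 := by positivity
  exact (half_sub_le_loss n hε0.le (by linarith)).trans
    (loss_le_sSup n ⟨by linarith, by linarith⟩)
end
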